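/- Let N ≥ 1, let A be a nonempty bounded subset of ℝ^N and let δ > 0. Assume that the box dimension D := dim_B A of A exists, that D < N, and that the lower D-dimensional Minkowski content satisfies M_*^D(A) > 0. Then the distance zeta function diverges at D from the right along the reals: the function σ ↦ ∫_{A_δ} d(x,A)^{σ−N} dx tends to +∞ as σ → D⁺ (i.e., as real σ tends to D within (D,∞)). -/

import Mathlib

open MeasureTheory Metric Filter Set
open scoped ENNReal Topology

/-- The upper `r`-dimensional Minkowski content of a subset of `ℝ^N`. -/
noncomputable def upperMink (N : ℕ) (A : Set (EuclideanSpace ℝ (Fin N))) (r : ℝ) : ℝ≥0∞ :=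
  Filter.limsup (fun t : ℝ => volume (thickening t A) / ENNReal.ofReal (t ^ ((N : ℝ) - r)))
    (𝓝[>] (0 : ℝ))

/-- The lower `r`-dimensional Minkowski content of a subset of `ℝ^N`. -/
noncomputable def lowerMink (N : ℕ) (A : Set (EuclideanSpace ℝ (Fin N))) (r : ℝ) : ℝ≥0∞ :=
  Filter.liminf (fun t : ℝ => volume (thickening t A) / ENNReal.ofReal (t ^ ((N : ℝ) - r)))
    (𝓝[>] (0 : ℝ))

/-- The upper box (Minkowski) dimension of a subset of `ℝ^N`. -/
noncomputable def upperBoxDim (N : ℕ) (A : Set (EuclideanSpace ℝ (Fin N))) : ℝ :=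
  sInf {r : ℝ | 0 < r ∧ upperMink N A r = 0}

/-- The lower box (Minkowski) dimension of a subset of `ℝ^N`. -/
noncomputable def lowerBoxDim (N : ℕ) (A : Set (EuclideanSpace ℝ (Fin N))) : ℝ :=
  sInf {r : ℝ | 0 < r ∧ lowerMink N A r = 0}

/-!
Since `D < N`, some `r < N` has vanishing upper `r`-content, so `|A_t| = O(t^(N-r))` and
`closure A` is Lebesgue-null. This matters because `0 ^ (σ - N) = 0` in Lean: the integrand
vanishes on `closure A` instead of being infinite, and only the complement counts.

By the layer-cake formula and the substitution `t = s ^ (σ - N)`, the zeta integral dominates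
`∫_{b^(σ-N)}^∞ |A_{t^(1/(σ-N))}| dt`. Positivity of `M_*^D(A)` gives `|A_s| ≥ c s^(N-D)` for
`0 < s < b`, so the integral is at least `c b^(σ-D) (N-σ)/(σ-D)`, which blows up as `σ → D⁺`.
-/

lemma tendsto_ofReal_rpow_nhdsGT_zero {a : ℝ} (ha : 0 < a) :
    Tendsto (fun t : ℝ => ENNReal.ofReal (t ^ a)) (𝓝[>] 0) (𝓝 0) := by
  have h := (Real.continuousAt_rpow_const 0 a (Or.inr ha.le)).tendsto.mono_left
    (nhdsWithin_le_nhds (s := Ioi 0))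
  rw [Real.zero_rpow ha.ne'] at h
  simpa using ENNReal.tendsto_ofReal h

lemma lintegral_Ioi_rpow_div {b p κ : ℝ} (hb : 0 < b) (hp : p < 0) (hpκ : 0 < p + κ) :
    ∫⁻ t in Ioi (b ^ p), ENNReal.ofReal (t ^ (κ / p)) =
      ENNReal.ofReal (b ^ (p + κ) * -p / (p + κ)) := by
  have hbp : 0 < b ^ p := Real.rpow_pos_of_pos hb p
  have hexp : κ / p < -1 := by rw [div_lt_iff_of_neg hp]; linarith
  rw [← ofReal_integral_eq_lintegral_ofReal (integrableOn_Ioi_rpow_of_lt hexp hbp)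
    ((ae_restrict_mem measurableSet_Ioi).mono fun t ht => Real.rpow_nonneg (hbp.trans ht).le _),
    integral_Ioi_rpow_of_lt hexp hbp, ← Real.rpow_mul hb.le]
  congr 1
  have hp' : p ≠ 0 := hp.ne
  have hpκ' : p + κ ≠ 0 := hpκ.ne'
  rw [show p * (κ / p + 1) = p + κ by field_simp; ring, show κ / p + 1 = (p + κ) / p by
    field_simp; ring]
  field_simp

lemma tendsto_rpow_sub_mul_sub_div_sub_nhdsGT {b D M : ℝ} (hb : 0 < b) (hDM : D < M) :
    Tendsto (fun σ : ℝ => b ^ (σ - D) * (M - σ) / (σ - D)) (𝓝[>] D) atTop := by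
  have hnum : Tendsto (fun σ : ℝ => b ^ (σ - D) * (M - σ)) (𝓝[>] D) (𝓝 (M - D)) := by
    have hc : Continuous fun σ : ℝ => b ^ (σ - D) * (M - σ) := by
      fun_prop (disch := exact hb.ne')
    simpa using (hc.tendsto D).mono_left nhdsWithin_le_nhds
  have hden : Tendsto (fun σ : ℝ => (σ - D)⁻¹) (𝓝[>] D) atTop := by
    refine tendsto_inv_nhdsGT_zero.comp ?_
    have h : Tendsto (· - D) (𝓝[>] D) (𝓝[>] (D - D)) := Filter.map_subRight_nhdsGT.le
    rwa [sub_self] at h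
  simpa only [div_eq_mul_inv] using hnum.pos_mul_atTop (sub_pos.2 hDM) hden

section MetricMeasure

variable {X : Type*} [PseudoMetricSpace X] [MeasurableSpace X] {μ : Measure X} {A : Set X}

lemma measure_thickening_le_restrict_rpow_lt_infDist (hA : A.Nonempty)
    (hnull : μ (closure A) = 0) {s b p : ℝ} (hsb : s ≤ b) (hp : p < 0) :
    μ (thickening s A) ≤ μ.restrict (thickening b A) {x | s ^ p < infDist x A ^ p} := by
  have hsub : thickening s A \ closure A ⊆ {x | s ^ p < infDist x A ^ p} ∩ thickening b A := by
    rintro x ⟨hxs, hxA⟩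
    have hlt : infDist x A < s := (mem_thickening_iff_infDist_lt hA).mp hxs
    have hpos : 0 < infDist x A :=
      infDist_nonneg.lt_of_ne fun h => hxA ((mem_closure_iff_infDist_zero hA).mpr h.symm)
    exact ⟨Real.rpow_lt_rpow_of_neg hpos hlt hp, thickening_mono hsb A hxs⟩
  calc μ (thickening s A) = μ (thickening s A \ closure A) := (measure_sdiff_null hnull).symm
    _ ≤ μ ({x | s ^ p < infDist x A ^ p} ∩ thickening b A) := measure_mono hsub
    _ ≤ _ := Measure.le_restrict_apply _ _

variable [OpensMeasurableSpace X]

theorem le_setLIntegral_infDist_rpow (hA : A.Nonempty) (hnull : μ (closure A) = 0)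
    {c : ℝ≥0∞} {b p κ : ℝ} (hb : 0 < b) (hp : p < 0) (hpκ : 0 < p + κ)
    (hthick : ∀ s ∈ Ioo 0 b, c * ENNReal.ofReal (s ^ κ) ≤ μ (thickening s A)) :
    c * ENNReal.ofReal (b ^ (p + κ) * -p / (p + κ)) ≤
      ∫⁻ x in thickening b A, ENNReal.ofReal (infDist x A ^ p) ∂μ := by
  have hbp : 0 < b ^ p := Real.rpow_pos_of_pos hb p
  have hmeas : Measurable fun x => infDist x A ^ p :=
    (continuous_infDist_pt A).measurable.pow_const _
  rw [lintegral_eq_lintegral_meas_lt _ (.of_forall fun x => Real.rpow_nonneg infDist_nonneg _)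
    hmeas.aemeasurable, ← lintegral_Ioi_rpow_div hb hp hpκ,
    ← lintegral_const_mul _ (by fun_prop : Measurable fun t : ℝ => ENNReal.ofReal (t ^ (κ / p)))]
  refine (setLIntegral_mono' measurableSet_Ioi fun t ht => ?_).trans
    (lintegral_mono_set (Ioi_subset_Ioi hbp.le))
  -- `t = s ^ p` for the radius `s = t ^ p⁻¹ ∈ (0, b)`
  have ht0 : 0 < t := hbp.trans ht
  have hs0 : 0 < t ^ p⁻¹ := Real.rpow_pos_of_pos ht0 _
  have hsb : t ^ p⁻¹ < b := by
    simpa [Real.rpow_rpow_inv hb.le hp.ne] using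
      Real.rpow_lt_rpow_of_neg hbp ht (inv_lt_zero.mpr hp)
  calc c * ENNReal.ofReal (t ^ (κ / p)) = c * ENNReal.ofReal ((t ^ p⁻¹) ^ κ) := by
        rw [← Real.rpow_mul ht0.le, inv_mul_eq_div]
    _ ≤ μ (thickening (t ^ p⁻¹) A) := hthick _ ⟨hs0, hsb⟩
    _ ≤ μ.restrict (thickening b A) {x | (t ^ p⁻¹) ^ p < infDist x A ^ p} :=
        measure_thickening_le_restrict_rpow_lt_infDist hA hnull hsb.le hp
    _ = μ.restrict (thickening b A) {x | t < infDist x A ^ p} := by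
        rw [Real.rpow_inv_rpow ht0.le hp.ne]

end MetricMeasure

section Minkowski

variable {N : ℕ} {A : Set (EuclideanSpace ℝ (Fin N))}

lemma upperMink_eq_zero_of_lt (hb : Bornology.IsBounded A) {r : ℝ} (hr : (N : ℝ) < r) :
    upperMink N A r = 0 := by
  have hbound : ∀ᶠ t in 𝓝[>] (0 : ℝ), volume (thickening t A) / ENNReal.ofReal (t ^ ((N : ℝ) - r))
      ≤ volume (thickening 1 A) * ENNReal.ofReal (t ^ (r - N)) := by
    filter_upwards [Ioo_mem_nhdsGT zero_lt_one] with t ⟨ht0, ht1⟩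
    rw [show (N : ℝ) - r = -(r - N) by ring, Real.rpow_neg ht0.le,
      ENNReal.ofReal_inv_of_pos (Real.rpow_pos_of_pos ht0 _), div_eq_mul_inv, inv_inv]
    exact mul_le_mul_left (measure_mono (thickening_mono ht1.le A)) _
  have hfin : volume (thickening 1 A) ≠ ⊤ := hb.thickening.measure_lt_top.ne
  have hlim := ENNReal.Tendsto.const_mul (tendsto_ofReal_rpow_nhdsGT_zero (sub_pos.2 hr))
    (Or.inr hfin)
  rw [mul_zero] at hlim
  exact (tendsto_of_tendsto_of_tendsto_of_le_of_le' tendsto_const_nhds hlim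
    (.of_forall fun _ => zero_le) hbound).limsup_eq

lemma exists_upperMink_eq_zero_of_upperBoxDim_lt (hb : Bornology.IsBounded A) {s : ℝ}
    (hs : upperBoxDim N A < s) : ∃ r < s, upperMink N A r = 0 := by
  have hne : ((N : ℝ) + 1) ∈ {r : ℝ | 0 < r ∧ upperMink N A r = 0} :=
    ⟨by positivity, upperMink_eq_zero_of_lt hb (lt_add_one _)⟩
  obtain ⟨r, ⟨-, hr⟩, hrs⟩ := (csInf_lt_iff ⟨0, fun _ h => h.1.le⟩ ⟨_, hne⟩).mp hs
  exact ⟨r, hrs, hr⟩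

lemma volume_closure_eq_zero_of_upperMink_eq_zero {r : ℝ} (hrN : r < N)
    (hr : upperMink N A r = 0) : volume (closure A) = 0 := by
  have hsmall : ∀ᶠ t in 𝓝[>] (0 : ℝ),
      volume (closure A) ≤ ENNReal.ofReal (t ^ ((N : ℝ) - r)) := by
    filter_upwards [eventually_lt_of_limsup_lt (hr.trans_lt zero_lt_one), self_mem_nhdsWithin]
      with t ht (ht0 : 0 < t)
    rw [ENNReal.div_lt_iff (Or.inl (by simp [Real.rpow_pos_of_pos ht0])) (Or.inl (by simp)),
      one_mul] at ht
    exact (measure_mono (closure_subset_thickening ht0 A)).trans ht.le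
  exact le_zero_iff.mp (ge_of_tendsto (tendsto_ofReal_rpow_nhdsGT_zero (sub_pos.2 hrN)) hsmall)

lemma exists_pos_eventually_mul_rpow_le_volume_thickening {D : ℝ} (h : 0 < lowerMink N A D) :
    ∃ c : ℝ≥0∞, c ≠ 0 ∧ ∀ᶠ s in 𝓝[>] (0 : ℝ),
      c * ENNReal.ofReal (s ^ ((N : ℝ) - D)) ≤ volume (thickening s A) := by
  obtain ⟨c, hc0, hc⟩ := exists_between h
  refine ⟨c, hc0.ne', ?_⟩
  filter_upwards [eventually_lt_of_lt_liminf hc, self_mem_nhdsWithin] with s hs (hs0 : 0 < s)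
  exact ((ENNReal.lt_div_iff_mul_lt (Or.inl (by simp [Real.rpow_pos_of_pos hs0]))
    (Or.inl (by simp))).mp hs).le

end Minkowski

theorem stmt2_general (N : ℕ) (A : Set (EuclideanSpace ℝ (Fin N)))
    (hA : A.Nonempty) (hb : Bornology.IsBounded A) (δ : ℝ) (hδ : 0 < δ) (D : ℝ)
    (hdim_upper : upperBoxDim N A = D)
    (hDN : D < N) (hlow : 0 < lowerMink N A D) :
    Tendsto
      (fun σ : ℝ => ∫⁻ x in thickening δ A, ENNReal.ofReal (Metric.infDist x A ^ (σ - (N : ℝ))))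
      (𝓝[>] D) (𝓝 (⊤ : ℝ≥0∞)) := by
  obtain ⟨r, hrN, hr⟩ := exists_upperMink_eq_zero_of_upperBoxDim_lt hb (hdim_upper.trans_lt hDN)
  have hnull := volume_closure_eq_zero_of_upperMink_eq_zero hrN hr
  obtain ⟨c, hc, hthick⟩ := exists_pos_eventually_mul_rpow_le_volume_thickening hlow
  obtain ⟨u, hu, hthick⟩ := mem_nhdsGT_iff_exists_Ioo_subset.mp hthick
  set b := min u δ
  have hb0 : 0 < b := lt_min hu hδ
  have hbound : ∀ᶠ σ in 𝓝[>] D, c * ENNReal.ofReal (b ^ (σ - D) * (N - σ) / (σ - D)) ≤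
      ∫⁻ x in thickening δ A, ENNReal.ofReal (infDist x A ^ (σ - N)) := by
    filter_upwards [self_mem_nhdsWithin, nhdsWithin_le_nhds (eventually_lt_nhds hDN)]
      with σ (hDσ : D < σ) hσN
    have h := le_setLIntegral_infDist_rpow hA hnull hb0 (sub_neg.2 hσN) (κ := N - D)
      (by linarith) fun s hs => hthick ⟨hs.1, hs.2.trans_le (min_le_left _ _)⟩
    rw [sub_add_sub_cancel, neg_sub] at h
    exact h.trans (lintegral_mono_set (thickening_mono (min_le_right _ _) A))
  refine tendsto_nhds_top_mono ?_ hbound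
  rw [← ENNReal.mul_top hc]
  exact ENNReal.Tendsto.const_mul
    (ENNReal.tendsto_ofReal_atTop.comp (tendsto_rpow_sub_mul_sub_div_sub_nhdsGT hb0 hDN))
    (Or.inl ENNReal.top_ne_zero)

/-- if the box dimension `D = dim_B A` exists, `D < N` and `M_*^D(A) > 0`,
then `σ ↦ ∫_{A_δ} d(x,A)^{σ−N} dx` tends to `+∞` as real `σ → D⁺`. -/
theorem stmt2 (N : ℕ) (hN : 1 ≤ N) (A : Set (EuclideanSpace ℝ (Fin N)))
    (hA : A.Nonempty) (hb : Bornology.IsBounded A) (δ : ℝ) (hδ : 0 < δ) (D : ℝ)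
    (hdim_upper : upperBoxDim N A = D) (hdim_lower : lowerBoxDim N A = D)
    (hDN : D < N) (hlow : 0 < lowerMink N A D) :
    Tendsto
      (fun σ : ℝ => ∫⁻ x in thickening δ A, ENNReal.ofReal (Metric.infDist x A ^ (σ - (N : ℝ))))
      (𝓝[>] D) (𝓝 (⊤ : ℝ≥0∞)) :=
  stmt2_general N A hA hb δ hδ D hdim_upper hDN hlow
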